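/- Let d ≥ 1, let Θ: ℤ^d × ℤ^d × ℤ^d → ℂ satisfy sup_{j,k,ℓ∈ℤ^d} |Θ(j,k,ℓ)| ⟨|j−k|+|j−ℓ|⟩^{2N} < ∞ for some N > d, let 1 ≤ p, q ≤ ∞ and 1 ≤ r < ∞ with 1/p + 1/q = 1/r, and let b = {b_k}_{k∈ℤ^d} be a bounded sequence with b_j = 0 for all |j| > j₁ (some j₁ ∈ ℕ). Then for every ε > 0 there exists j₀ ∈ ℕ, depending only on ε, j₁, ‖b‖_{ℓ^∞}, N, d, p, q, r, and the above supremum of Θ, such that (Σ_{|j| > j₀} |([𝒯_Θ, b]₁(f,g))_j|^r)^{1/r} < ε for all f ∈ ℓ^p(ℤ^d) and g ∈ ℓ^q(ℤ^d) with ‖f‖_{ℓ^p} ≤ 1 and ‖g‖_{ℓ^q} ≤ 1. -/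

import Mathlib

open scoped ENNReal NNReal BigOperators

noncomputable section

/-- The integer lattice `ℤ^d`. -/
abbrev Zd (d : ℕ) := Fin d → ℤ

/-- Euclidean norm `|j|` of an integer vector `j ∈ ℤ^d`. -/
def znorm {d : ℕ} (j : Zd d) : ℝ := Real.sqrt (∑ i, ((j i : ℝ)) ^ 2)

/-- Euclidean norm of a real vector. -/
def rnorm {d : ℕ} (x : Fin d → ℝ) : ℝ := Real.sqrt (∑ i, (x i) ^ 2)

/-- Japanese bracket `⟨x⟩ = (1 + x²)^{1/2}`. -/
def jb (x : ℝ) : ℝ := Real.sqrt (1 + x ^ 2)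

/-- The discrete bilinear operator `𝒯_Θ` (named `Tbil` here) associated with an infinite tensor `Θ`:
`(𝒯_Θ(f,g))_j = Σ_k Σ_ℓ Θ(j,k,ℓ) f_k g_ℓ`. -/
def Tbil {d : ℕ} (Θ : Zd d → Zd d → Zd d → ℂ) (f g : Zd d → ℂ) : Zd d → ℂ :=
  fun j => ∑' k, ∑' l, Θ j k l * f k * g l

/-- `ℓ^p`-type norm (extended-real valued) of a family of nonnegative extended reals,
with the usual modification (supremum) when `p = ∞`. -/
def nestNorm {ι : Type*} (p : ℝ≥0∞) (F : ι → ℝ≥0∞) : ℝ≥0∞ :=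
  if p = ∞ then ⨆ i, F i else (∑' i, F i ^ p.toReal) ^ (1 / p.toReal)

/-- The weighted `ℓ^p_s(ℤ^d)` norm `(Σ_k ⟨k⟩^{sp} |f_k|^p)^{1/p}`. -/
def wlpNorm {d : ℕ} (p : ℝ≥0∞) (s : ℝ) (f : Zd d → ℂ) : ℝ≥0∞ :=
  nestNorm p fun k => ENNReal.ofReal (jb (znorm k) ^ s * ‖f k‖)

/-- The `ℓ^p(ℤ^d)` norm. -/
def lpNorm {d : ℕ} (p : ℝ≥0∞) (f : Zd d → ℂ) : ℝ≥0∞ :=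
  nestNorm p fun k => ENNReal.ofReal ‖f k‖

/-- The tensor norm `‖Θ‖_{ω,N} = sup_{j,k,ℓ} |Θ(j,k,ℓ)| ⟨|j−k|+|j−ℓ|⟩^{2N} /
(⟨|j|+|k|⟩^ω ⟨|j|+|ℓ|⟩^ω)`. -/
def tensorNorm {d : ℕ} (ω N : ℝ) (Θ : Zd d → Zd d → Zd d → ℂ) : ℝ≥0∞ :=
  ⨆ j, ⨆ k, ⨆ l, ENNReal.ofReal
    (‖Θ j k l‖ * jb (znorm (j - k) + znorm (j - l)) ^ (2 * N) /
      (jb (znorm j + znorm k) ^ ω * jb (znorm j + znorm l) ^ ω))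

/-- The tensor norm `‖Θ‖_{ω₁,ω₂,N}`. -/
def tensorNorm2 {d : ℕ} (ω₁ ω₂ N : ℝ) (Θ : Zd d → Zd d → Zd d → ℂ) : ℝ≥0∞ :=
  ⨆ j, ⨆ k, ⨆ l, ENNReal.ofReal
    (‖Θ j k l‖ * jb (znorm (j - k) + znorm (j - l)) ^ (2 * N) /
      (jb (znorm j + znorm k) ^ ω₁ * jb (znorm j + znorm l) ^ ω₂))

/-- The tensor norm `‖Θ‖_{0,0,ω,N} = sup_{j,k,ℓ} |Θ(j,k,ℓ)| ⟨|j−k|+|j−ℓ|⟩^{2N} /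
⟨|j|+|k|+|ℓ|⟩^ω`. -/
def tensorNorm00 {d : ℕ} (ω N : ℝ) (Θ : Zd d → Zd d → Zd d → ℂ) : ℝ≥0∞ :=
  ⨆ j, ⨆ k, ⨆ l, ENNReal.ofReal
    (‖Θ j k l‖ * jb (znorm (j - k) + znorm (j - l)) ^ (2 * N) /
      jb (znorm j + znorm k + znorm l) ^ ω)

/-- The first bilinear commutator `[𝒯_Θ, b]₁(f,g) = 𝒯_Θ(bf, g) − b·𝒯_Θ(f,g)`. -/
def comm1 {d : ℕ} (Θ : Zd d → Zd d → Zd d → ℂ) (b f g : Zd d → ℂ) : Zd d → ℂ :=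
  fun j => Tbil Θ (fun k => b k * f k) g j - b j * Tbil Θ f g j

/-- The second bilinear commutator `[𝒯_Θ, b]₂(f,g) = 𝒯_Θ(f, bg) − b·𝒯_Θ(f,g)`. -/
def comm2 {d : ℕ} (Θ : Zd d → Zd d → Zd d → ℂ) (b f g : Zd d → ℂ) : Zd d → ℂ :=
  fun j => Tbil Θ f (fun l => b l * g l) j - b j * Tbil Θ f g j

/-- One-step finite difference in the variables `(j,k)`, with shift `v ∈ ℤ^d`:
`(D2 v Θ)(j,k,ℓ) = Θ(j+v, k+v, ℓ) − Θ(j,k,ℓ)`. -/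
def D2 {d : ℕ} (v : Zd d) (Θ : Zd d → Zd d → Zd d → ℂ) : Zd d → Zd d → Zd d → ℂ :=
  fun j k l => Θ (j + v) (k + v) l - Θ j k l

/-- One-step finite difference in the variables `(j,ℓ)`, with shift `v ∈ ℤ^d`:
`(D3 v Θ)(j,k,ℓ) = Θ(j+v, k, ℓ+v) − Θ(j,k,ℓ)`. -/
def D3 {d : ℕ} (v : Zd d) (Θ : Zd d → Zd d → Zd d → ℂ) : Zd d → Zd d → Zd d → ℂ :=
  fun j k l => Θ (j + v) k (l + v) - Θ j k l

/-- The iterated partial finite difference operator `Δ₂^α` for `α ∈ ℤ^d`: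
in direction `m`, `Δ_{2,m}^t = (Δ₂^{m, sign t})^{|t|}`. -/
def Delta2 {d : ℕ} (α : Zd d) (Θ : Zd d → Zd d → Zd d → ℂ) : Zd d → Zd d → Zd d → ℂ :=
  (List.finRange d).foldr
    (fun m F => (D2 (Pi.single m (Int.sign (α m))))^[(α m).natAbs] ∘ F) id Θ

/-- The iterated partial finite difference operator `Δ₃^β` for `β ∈ ℤ^d`. -/
def Delta3 {d : ℕ} (β : Zd d) (Θ : Zd d → Zd d → Zd d → ℂ) : Zd d → Zd d → Zd d → ℂ :=
  (List.finRange d).foldr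
    (fun m F => (D3 (Pi.single m (Int.sign (β m))))^[(β m).natAbs] ∘ F) id Θ

/-- `|α| = Σ_m |α_m|` for `α ∈ ℤ^d`. -/
def l1norm {d : ℕ} (α : Zd d) : ℝ := ∑ m, |(α m : ℝ)|

/-- The bilinear tensor class `BT^{ω,N}(ℤ^d)`:
`|Δ₂^α Δ₃^β Θ(j,k,ℓ)| ≤ C_{N,α,β} ⟨|j|+|k|+|ℓ|⟩^{ω−|α|−|β|} ⟨|j−k|+|j−ℓ|⟩^{−2N}`. -/
def BT {d : ℕ} (ω : ℝ) (N : ℕ) (Θ : Zd d → Zd d → Zd d → ℂ) : Prop :=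
  ∀ α β : Zd d, ∃ C : ℝ, 0 < C ∧ ∀ j k l : Zd d,
    ‖Delta2 α (Delta3 β Θ) j k l‖ ≤
      C * jb (znorm j + znorm k + znorm l) ^ (ω - l1norm α - l1norm β) *
        jb (znorm (j - k) + znorm (j - l)) ^ (-(2 * (N : ℝ)))

/-- The bilinear tensor class of order zero, `BT^0(ℤ^d) = ∪_{N > d} BT^{0,N}(ℤ^d)`. -/
def BT0 {d : ℕ} (Θ : Zd d → Zd d → Zd d → ℂ) : Prop :=
  ∃ N : ℕ, d < N ∧ BT 0 N Θ

/-- Directional derivative of a function on `ℝ^d × ℝ^d` in the direction `v`. -/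
def pDeriv {d : ℕ} (v : (Fin d → ℝ) × (Fin d → ℝ))
    (F : (Fin d → ℝ) × (Fin d → ℝ) → ℂ) : (Fin d → ℝ) × (Fin d → ℝ) → ℂ :=
  fun p => fderiv ℝ F p v

/-- Iterated partial derivative `∂_x^α` in the first group of variables. -/
def pdx {d : ℕ} (α : Fin d → ℕ) :
    ((Fin d → ℝ) × (Fin d → ℝ) → ℂ) → (Fin d → ℝ) × (Fin d → ℝ) → ℂ :=
  (List.finRange d).foldr (fun m G => (pDeriv (Pi.single m 1, 0))^[α m] ∘ G) id

/-- Iterated partial derivative `∂_y^β` in the second group of variables. -/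
def pdy {d : ℕ} (β : Fin d → ℕ) :
    ((Fin d → ℝ) × (Fin d → ℝ) → ℂ) → (Fin d → ℝ) × (Fin d → ℝ) → ℂ :=
  (List.finRange d).foldr (fun m G => (pDeriv (0, Pi.single m 1))^[β m] ∘ G) id


/-! Since `⟨a⟩⟨b⟩ ≤ ⟨a + b⟩²`, the hypothesis on `Θ` gives
`|Θ(j,k,ℓ)| ≲ ⟨|j-k|⟩^{-N} ⟨|j-ℓ|⟩^{-N}`. For `|j| > j₁` the commutator is `𝒯_Θ(bf, g)_j`, and `bf`
lives on the finite ball `|k| ≤ j₁`; summing out `ℓ` and using Peetre's inequality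
`⟨|j|⟩ ≤ √2 ⟨|k|⟩ ⟨|j-k|⟩` bounds it by `A ⟨|j|⟩^{-N}`, with `A` independent of `f` and `g`.
As `N r ≥ N > d`, the weights `⟨|j|⟩^{-N r}` are summable over `ℤ^d`, so their tails, and with
them the `ℓ^r` tails of the commutator, are uniformly small. -/

open Filter Finset

section

variable {d : ℕ}

lemma one_le_jb (x : ℝ) : 1 ≤ jb x :=
  Real.one_le_sqrt.mpr (by nlinarith [sq_nonneg x])

lemma jb_pos (x : ℝ) : 0 < jb x := one_pos.trans_le (one_le_jb x)

lemma jb_sq (x : ℝ) : jb x ^ 2 = 1 + x ^ 2 := Real.sq_sqrt (by positivity)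

lemma jb_le_jb {x y : ℝ} (hx : 0 ≤ x) (h : x ≤ y) : jb x ≤ jb y :=
  Real.sqrt_le_sqrt (by nlinarith)

lemma jb_add_le (a b : ℝ) : jb (a + b) ≤ Real.sqrt 2 * jb a * jb b := by
  rw [jb, jb, jb, ← Real.sqrt_mul zero_le_two, ← Real.sqrt_mul (by positivity)]
  exact Real.sqrt_le_sqrt (by nlinarith [sq_nonneg (a - b), sq_nonneg (a * b)])

lemma jb_mul_jb_le_sq {a b : ℝ} (ha : 0 ≤ a) (hb : 0 ≤ b) : jb a * jb b ≤ jb (a + b) ^ 2 := by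
  refine le_of_pow_le_pow_left₀ two_ne_zero (by positivity) ?_
  rw [mul_pow, jb_sq, jb_sq, jb_sq]
  nlinarith [mul_nonneg ha hb, mul_nonneg (mul_nonneg ha hb) (mul_nonneg ha hb)]

lemma jb_rpow_mul_jb_rpow_le {a b N : ℝ} (ha : 0 ≤ a) (hb : 0 ≤ b) (hN : 0 ≤ N) :
    jb a ^ N * jb b ^ N ≤ jb (a + b) ^ (2 * N) := by
  rw [← Real.mul_rpow (jb_pos a).le (jb_pos b).le, Real.rpow_mul (jb_pos _).le, Real.rpow_two]
  exact Real.rpow_le_rpow (mul_pos (jb_pos a) (jb_pos b)).le (jb_mul_jb_le_sq ha hb) hN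

lemma znorm_nonneg (j : Zd d) : 0 ≤ znorm j := Real.sqrt_nonneg _

lemma znorm_eq_norm (j : Zd d) :
    znorm j = ‖WithLp.toLp 2 (fun i => (j i : ℝ) : Fin d → ℝ)‖ := by
  simp [znorm, EuclideanSpace.norm_eq]

lemma znorm_le_znorm_sub_add (j k : Zd d) : znorm j ≤ znorm (j - k) + znorm k := by
  have hsplit : WithLp.toLp 2 (fun i => (j i : ℝ) : Fin d → ℝ) =
      WithLp.toLp 2 (fun i => ((j - k) i : ℝ)) + WithLp.toLp 2 (fun i => (k i : ℝ)) := by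
    ext i
    simp
  simp only [znorm_eq_norm, hsplit]
  exact norm_add_le _ _

lemma abs_le_znorm (j : Zd d) (i : Fin d) : |(j i : ℝ)| ≤ znorm j :=
  Real.abs_le_sqrt (single_le_sum (f := fun i => (j i : ℝ) ^ 2) (fun _ _ => sq_nonneg _)
    (mem_univ i))

lemma finite_setOf_znorm_le (c : ℝ) : {k : Zd d | znorm k ≤ c}.Finite := by
  refine (Set.finite_Icc (fun _ => -⌈c⌉) fun _ => ⌈c⌉).subset fun k hk => ?_
  have hcoord (i : Fin d) : |k i| ≤ ⌈c⌉ := by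
    exact_mod_cast (abs_le_znorm k i).trans (hk.trans (Int.le_ceil c))
  exact ⟨fun i => (abs_le.mp (hcoord i)).1, fun i => (abs_le.mp (hcoord i)).2⟩

lemma jb_znorm_sub_rpow_neg_le {N : ℝ} (hN : 0 ≤ N) (j k : Zd d) :
    jb (znorm (j - k)) ^ (-N) ≤ (Real.sqrt 2 * jb (znorm k)) ^ N * jb (znorm j) ^ (-N) := by
  have hpeetre : jb (znorm j) ≤ Real.sqrt 2 * jb (znorm k) * jb (znorm (j - k)) :=
    calc jb (znorm j) ≤ jb (znorm (j - k) + znorm k) :=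
          jb_le_jb (znorm_nonneg j) (znorm_le_znorm_sub_add j k)
      _ ≤ Real.sqrt 2 * jb (znorm (j - k)) * jb (znorm k) := jb_add_le _ _
      _ = Real.sqrt 2 * jb (znorm k) * jb (znorm (j - k)) := by ring
  have hjk := Real.rpow_pos_of_pos (jb_pos (znorm (j - k))) N
  have hj := Real.rpow_pos_of_pos (jb_pos (znorm j)) N
  rw [Real.rpow_neg (jb_pos _).le, Real.rpow_neg (jb_pos _).le, ← div_eq_mul_inv,
    inv_le_iff_one_le_mul₀ hjk, div_mul_eq_mul_div, le_div_iff₀ hj, one_mul, ← Real.mul_rpow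
    (mul_nonneg (Real.sqrt_nonneg 2) (jb_pos _).le) (jb_pos _).le]
  exact Real.rpow_le_rpow (jb_pos _).le hpeetre hN

lemma summable_prod_comp {ι κ : Type*} [Fintype ι] {φ : κ → ℝ} (h0 : 0 ≤ φ)
    (hφ : Summable φ) : Summable fun x : ι → κ => ∏ i, φ (x i) := by
  classical
  refine summable_of_sum_le (c := (∑' a, φ a) ^ Fintype.card ι)
    (fun x => prod_nonneg fun i _ => h0 (x i)) fun s => ?_
  let t : ι → Finset κ := fun i => s.image (· i)
  calc ∑ x ∈ s, ∏ i, φ (x i) ≤ ∑ x ∈ Fintype.piFinset t, ∏ i, φ (x i) :=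
        sum_le_sum_of_subset_of_nonneg
          (fun x hx => Fintype.mem_piFinset.mpr fun i => mem_image_of_mem _ hx)
          fun x _ _ => prod_nonneg fun i _ => h0 (x i)
    _ = ∏ i, ∑ a ∈ t i, φ a := (prod_univ_sum t fun _ => φ).symm
    _ ≤ ∏ _i : ι, ∑' a, φ a :=
        prod_le_prod (fun i _ => sum_nonneg fun a _ => h0 a)
          fun i _ => hφ.sum_le_tsum _ fun a _ => h0 a
    _ = (∑' a, φ a) ^ Fintype.card ι := by rw [prod_const, card_univ]

lemma summable_one_add_sq_rpow_neg {s : ℝ} (hs : 1 / 2 < s) :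
    Summable fun n : ℤ => (1 + (n : ℝ) ^ 2) ^ (-s) := by
  refine (Real.summable_abs_int_rpow (b := 2 * s) (by linarith)).of_norm_bounded_eventually ?_
  filter_upwards [eventually_cofinite_ne 0] with n hn
  have hn2 : 0 < (n : ℝ) ^ 2 := by positivity
  rw [Real.norm_of_nonneg (by positivity), neg_mul_eq_mul_neg, Real.rpow_mul (abs_nonneg _),
    Real.rpow_two, sq_abs]
  exact Real.rpow_le_rpow_of_nonpos hn2 (by linarith) (by linarith)

lemma summable_jb_znorm_rpow_neg {N : ℝ} (hN : (d : ℝ) < N) :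
    Summable fun m : Zd d => jb (znorm m) ^ (-N) := by
  obtain ⟨s, hs, hsd⟩ : ∃ s : ℝ, 1 / 2 < s ∧ d * s ≤ N / 2 := by
    rcases Nat.eq_zero_or_pos d with rfl | hd
    · exact ⟨1, by norm_num, by norm_num at hN ⊢; linarith⟩
    · refine ⟨N / (2 * d), by rw [lt_div_iff₀ (by positivity)]; linarith, le_of_eq ?_⟩
      field_simp
  refine (summable_prod_comp (fun n => by positivity)
    (summable_one_add_sq_rpow_neg hs)).of_nonneg_of_le
    (fun m => Real.rpow_nonneg (jb_pos _).le _) fun m => ?_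
  set Q : ℝ := 1 + ∑ i, (m i : ℝ) ^ 2
  have hQ : 1 ≤ Q := le_add_of_nonneg_right (sum_nonneg fun i _ => sq_nonneg _)
  calc jb (znorm m) ^ (-N) = Q ^ (-(N / 2)) := by
        rw [jb, znorm, Real.sq_sqrt (sum_nonneg fun i _ => sq_nonneg _), Real.sqrt_eq_rpow,
          ← Real.rpow_mul (by positivity)]
        congr 1
        ring
    _ ≤ Q ^ (-s * d) := Real.rpow_le_rpow_of_exponent_le hQ (by linarith)
    _ = ∏ _i : Fin d, Q ^ (-s) := by
        rw [Real.rpow_mul_natCast (by positivity), prod_const, card_univ, Fintype.card_fin]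
    _ ≤ ∏ i, (1 + (m i : ℝ) ^ 2) ^ (-s) :=
        prod_le_prod (fun i _ => by positivity) fun i _ =>
          Real.rpow_le_rpow_of_nonpos (by positivity)
            (add_le_add le_rfl (single_le_sum (f := fun i => (m i : ℝ) ^ 2)
              (fun _ _ => sq_nonneg _) (mem_univ i))) (by linarith)

lemma le_mul_jb_rpow_neg_of_mul_jb_rpow_le {x a b C N : ℝ} (ha : 0 ≤ a) (hb : 0 ≤ b)
    (hN : 0 ≤ N) (hx : 0 ≤ x) (h : x * jb (a + b) ^ (2 * N) ≤ C) :
    x ≤ C * jb a ^ (-N) * jb b ^ (-N) := by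
  have hpos := mul_pos (Real.rpow_pos_of_pos (jb_pos a) N) (Real.rpow_pos_of_pos (jb_pos b) N)
  rw [mul_assoc, Real.rpow_neg (jb_pos _).le, Real.rpow_neg (jb_pos _).le, ← mul_inv,
    ← div_eq_mul_inv, le_div_iff₀ hpos]
  exact (mul_le_mul_of_nonneg_left (jb_rpow_mul_jb_rpow_le ha hb hN) hx).trans h

lemma le_nestNorm {ι : Type*} {p : ℝ≥0∞} (hp : p ≠ 0) (F : ι → ℝ≥0∞) (i : ι) :
    F i ≤ nestNorm p F := by
  unfold nestNorm
  split_ifs with hp'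
  · exact le_iSup F i
  · have ht : 0 < p.toReal := ENNReal.toReal_pos hp hp'
    calc F i = (F i ^ p.toReal) ^ (1 / p.toReal) := by
          rw [one_div, ENNReal.rpow_rpow_inv ht.ne']
      _ ≤ _ := ENNReal.rpow_le_rpow (ENNReal.le_tsum i) (by positivity)

lemma norm_le_one_of_lpNorm_le_one {p : ℝ≥0∞} (hp : p ≠ 0) {f : Zd d → ℂ}
    (hf : lpNorm p f ≤ 1) (k : Zd d) : ‖f k‖ ≤ 1 :=
  ENNReal.ofReal_le_one.mp ((le_nestNorm hp _ k).trans hf)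

lemma norm_Tbil_le {N C : ℝ} (hN : (d : ℝ) < N) {Θ : Zd d → Zd d → Zd d → ℂ}
    (hΘ : ∀ j k l, ‖Θ j k l‖ ≤ C * jb (znorm (j - k)) ^ (-N) * jb (znorm (j - l)) ^ (-N))
    {s : Finset (Zd d)} {b f g : Zd d → ℂ} (hb : ∀ k ∉ s, b k = 0) (hf : ∀ k, ‖f k‖ ≤ 1)
    (hg : ∀ l, ‖g l‖ ≤ 1) (j : Zd d) :
    ‖Tbil Θ (fun k => b k * f k) g j‖ ≤ C * (∑' m : Zd d, jb (znorm m) ^ (-N)) *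
      (∑ k ∈ s, ‖b k‖ * (Real.sqrt 2 * jb (znorm k)) ^ N) * jb (znorm j) ^ (-N) := by
  have hN0 : 0 ≤ N := (Nat.cast_nonneg d).trans hN.le
  have hC : 0 ≤ C := nonneg_of_mul_nonneg_left (nonneg_of_mul_nonneg_left ((norm_nonneg _).trans
    (hΘ 0 0 0)) (Real.rpow_pos_of_pos (jb_pos _) _)) (Real.rpow_pos_of_pos (jb_pos _) _)
  set S := ∑' m : Zd d, jb (znorm m) ^ (-N)
  have hS0 : 0 ≤ S := tsum_nonneg fun m => Real.rpow_nonneg (jb_pos _).le _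
  have hS : HasSum (fun l => jb (znorm (j - l)) ^ (-N)) S :=
    (Equiv.subLeft j).hasSum_iff.mpr (summable_jb_znorm_rpow_neg hN).hasSum
  have hrow (k : Zd d) : ‖∑' l, Θ j k l * (b k * f k) * g l‖ ≤
      C * S * (‖b k‖ * (Real.sqrt 2 * jb (znorm k)) ^ N) * jb (znorm j) ^ (-N) := by
    refine (tsum_of_norm_bounded (hS.mul_left (C * jb (znorm (j - k)) ^ (-N) * ‖b k‖))
      fun l => ?_).trans ?_
    · calc ‖Θ j k l * (b k * f k) * g l‖ = ‖Θ j k l‖ * ‖b k‖ * (‖f k‖ * ‖g l‖) := by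
            simp only [norm_mul]; ring
        _ ≤ ‖Θ j k l‖ * ‖b k‖ :=
            mul_le_of_le_one_right (by positivity) (mul_le_one₀ (hf k) (norm_nonneg _) (hg l))
        _ ≤ C * jb (znorm (j - k)) ^ (-N) * jb (znorm (j - l)) ^ (-N) * ‖b k‖ :=
            mul_le_mul_of_nonneg_right (hΘ j k l) (norm_nonneg _)
        _ = _ := by ring
    · calc C * jb (znorm (j - k)) ^ (-N) * ‖b k‖ * S = C * S * ‖b k‖ * jb (znorm (j - k)) ^ (-N) :=
            by ring
        _ ≤ C * S * ‖b k‖ * ((Real.sqrt 2 * jb (znorm k)) ^ N * jb (znorm j) ^ (-N)) :=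
            mul_le_mul_of_nonneg_left (jb_znorm_sub_rpow_neg_le hN0 j k) (by positivity)
        _ = _ := by ring
  rw [Tbil, tsum_eq_sum (s := s) fun k hk => by simp [hb k hk]]
  calc ‖∑ k ∈ s, ∑' l, Θ j k l * (b k * f k) * g l‖
        ≤ ∑ k ∈ s, ‖∑' l, Θ j k l * (b k * f k) * g l‖ := norm_sum_le _ _
    _ ≤ ∑ k ∈ s, C * S * (‖b k‖ * (Real.sqrt 2 * jb (znorm k)) ^ N) * jb (znorm j) ^ (-N) :=
        sum_le_sum fun k _ => hrow k
    _ = _ := by rw [← sum_mul, ← mul_sum]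

lemma eventually_tsum_znorm_gt_lt {u : Zd d → ℝ≥0∞} (hu : ∑' j, u j ≠ ∞) {δ : ℝ≥0∞}
    (hδ : 0 < δ) : ∀ᶠ R : ℕ in atTop, ∑' j : {j : Zd d // (R : ℝ) < znorm j}, u j < δ := by
  obtain ⟨s, hs⟩ :=
    eventually_atTop.mp ((ENNReal.tendsto_tsum_compl_atTop_zero hu).eventually_lt_const hδ)
  filter_upwards [eventually_ge_atTop (s.sup fun k => ⌈znorm k⌉₊)] with R hR
  refine (ENNReal.tsum_mono_subtype u (t := {j | j ∉ s}) fun j hj hjs => ?_).trans_lt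
    (hs s le_rfl)
  have : ⌈znorm j⌉₊ ≤ R := (le_sup (f := fun k => ⌈znorm k⌉₊) hjs).trans hR
  exact not_lt.mpr ((Nat.le_ceil (znorm j)).trans (Nat.cast_le.mpr this)) hj

lemma tsum_ofReal_mul_jb_rpow_ne_top {A N t : ℝ} (hA : 0 ≤ A) (ht : 0 < t)
    (hNt : (d : ℝ) < N * t) :
    ∑' j : Zd d, ENNReal.ofReal (A * jb (znorm j) ^ (-N)) ^ t ≠ ∞ := by
  have hw (j : Zd d) : 0 ≤ A * jb (znorm j) ^ (-N) :=
    mul_nonneg hA (Real.rpow_nonneg (jb_pos _).le _)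
  have hsum : Summable fun j : Zd d => (A * jb (znorm j) ^ (-N)) ^ t := by
    refine ((summable_jb_znorm_rpow_neg hNt).mul_left (A ^ t)).congr fun j => ?_
    rw [Real.mul_rpow hA (Real.rpow_nonneg (jb_pos _).le _), ← Real.rpow_mul (jb_pos _).le,
      neg_mul]
  simp_rw [ENNReal.ofReal_rpow_of_nonneg (hw _) ht.le]
  rw [← ENNReal.ofReal_tsum_of_nonneg (fun j => Real.rpow_nonneg (hw j) t) hsum]
  exact ENNReal.ofReal_ne_top

lemma exists_tsum_znorm_gt_rpow_lt {A N t ε : ℝ} (ht : 0 < t)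
    (hNt : (d : ℝ) < N * t) (hε : 0 < ε) (R : ℕ) :
    ∃ j₀ : ℕ, ∀ c : Zd d → ℂ, (∀ j, (R : ℝ) < znorm j → ‖c j‖ ≤ A * jb (znorm j) ^ (-N)) →
      (∑' j : {j : Zd d // (j₀ : ℝ) < znorm j}, ENNReal.ofReal ‖c j.1‖ ^ t) ^ (1 / t)
        < ENNReal.ofReal ε := by
  have hεt : 0 < ENNReal.ofReal ε ^ t := ENNReal.rpow_pos (by simpa using hε) ENNReal.ofReal_ne_top
  have hw := tsum_ofReal_mul_jb_rpow_ne_top (le_max_right A 0) ht hNt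
  obtain ⟨j₀, hsmall, hRj₀⟩ :=
    ((eventually_tsum_znorm_gt_lt hw hεt).and (eventually_ge_atTop R)).exists
  refine ⟨j₀, fun c hc => ?_⟩
  have hle (j : {j : Zd d // (j₀ : ℝ) < znorm j}) :
      ENNReal.ofReal ‖c j.1‖ ^ t ≤ ENNReal.ofReal (max A 0 * jb (znorm j.1) ^ (-N)) ^ t :=
    ENNReal.rpow_le_rpow (ENNReal.ofReal_le_ofReal <|
      (hc j.1 ((Nat.cast_le.mpr hRj₀).trans_lt j.2)).trans <|
        mul_le_mul_of_nonneg_right (le_max_left A 0) (Real.rpow_nonneg (jb_pos _).le _)) ht.le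
  calc _ ≤ (∑' j : {j : Zd d // (j₀ : ℝ) < znorm j},
          ENNReal.ofReal (max A 0 * jb (znorm j.1) ^ (-N)) ^ t) ^ (1 / t) :=
        ENNReal.rpow_le_rpow (ENNReal.tsum_le_tsum hle) (by positivity)
    _ < (ENNReal.ofReal ε ^ t) ^ (1 / t) := ENNReal.rpow_lt_rpow hsmall (by positivity)
    _ = ENNReal.ofReal ε := by rw [one_div, ENNReal.rpow_rpow_inv ht.ne']

end

theorem stmt_9_general {d : ℕ} (N : ℝ) (hN : (d : ℝ) < N)
    (Θ : Zd d → Zd d → Zd d → ℂ)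
    (hΘ : (⨆ j : Zd d, ⨆ k : Zd d, ⨆ l : Zd d,
      ENNReal.ofReal (‖Θ j k l‖ * jb (znorm (j - k) + znorm (j - l)) ^ (2 * N))) ≠ ∞)
    (p q r : ℝ≥0∞) (hp : 1 ≤ p) (hq : 1 ≤ q) (hr : 1 ≤ r) (hr' : r ≠ ∞)
    (b : Zd d → ℂ) (j₁ : ℕ) (hb : ∀ j : Zd d, (j₁ : ℝ) < znorm j → b j = 0) :
    ∀ ε : ℝ, 0 < ε → ∃ j₀ : ℕ, ∀ f g : Zd d → ℂ,
      lpNorm p f ≤ 1 → lpNorm q g ≤ 1 →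
        (∑' j : {j : Zd d // (j₀ : ℝ) < znorm j},
            ENNReal.ofReal ‖comm1 Θ b f g j.1‖ ^ r.toReal) ^ (1 / r.toReal)
          < ENNReal.ofReal ε := by
  intro ε hε
  have hN0 : 0 ≤ N := (Nat.cast_nonneg d).trans hN.le
  obtain ⟨C, hC⟩ : ∃ C, ∀ j k l, ‖Θ j k l‖ * jb (znorm (j - k) + znorm (j - l)) ^ (2 * N) ≤ C :=
    ⟨_, fun j k l => (ENNReal.ofReal_le_iff_le_toReal hΘ).mp
      (le_iSup_of_le j <| le_iSup_of_le k <| le_iSup_of_le l le_rfl)⟩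
  have hΘC (j k l : Zd d) := le_mul_jb_rpow_neg_of_mul_jb_rpow_le (znorm_nonneg _)
    (znorm_nonneg _) hN0 (norm_nonneg _) (hC j k l)
  set s := (finite_setOf_znorm_le (d := d) j₁).toFinset
  have hbs (k : Zd d) (hk : k ∉ s) : b k = 0 := hb k (by simpa [s] using hk)
  set A := C * (∑' m : Zd d, jb (znorm m) ^ (-N)) *
    (∑ k ∈ s, ‖b k‖ * (Real.sqrt 2 * jb (znorm k)) ^ N)
  have hrt : 1 ≤ r.toReal := by simpa using ENNReal.toReal_mono hr' hr
  obtain ⟨j₀, hj₀⟩ :=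
    exists_tsum_znorm_gt_rpow_lt (A := A) (N := N) (by linarith) (by nlinarith) hε j₁
  refine ⟨j₀, fun f g hf hg => hj₀ _ fun j hj => ?_⟩
  have hf1 := norm_le_one_of_lpNorm_le_one (one_pos.trans_le hp).ne' hf
  have hg1 := norm_le_one_of_lpNorm_le_one (one_pos.trans_le hq).ne' hg
  rw [comm1, hb j hj, zero_mul, sub_zero]
  exact norm_Tbil_le hN hΘC hbs hf1 hg1 j

/-- uniform smallness of the tails of `[𝒯_Θ, b]₁(f,g)` in `ℓ^r`, for `b`
bounded and supported in `{|j| ≤ j₁}`, uniformly over `‖f‖_{ℓ^p} ≤ 1`, `‖g‖_{ℓ^q} ≤ 1`. -/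
theorem stmt_9 {d : ℕ} (hd : 1 ≤ d) (N : ℝ) (hN : (d : ℝ) < N)
    (Θ : Zd d → Zd d → Zd d → ℂ)
    (hΘ : (⨆ j : Zd d, ⨆ k : Zd d, ⨆ l : Zd d,
      ENNReal.ofReal (‖Θ j k l‖ * jb (znorm (j - k) + znorm (j - l)) ^ (2 * N))) ≠ ∞)
    (p q r : ℝ≥0∞) (hp : 1 ≤ p) (hq : 1 ≤ q) (hr : 1 ≤ r) (hr' : r ≠ ∞)
    (hpqr : p⁻¹ + q⁻¹ = r⁻¹)
    (b : Zd d → ℂ) (j₁ : ℕ) (hb : ∀ j : Zd d, (j₁ : ℝ) < znorm j → b j = 0) :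
    ∀ ε : ℝ, 0 < ε → ∃ j₀ : ℕ, ∀ f g : Zd d → ℂ,
      lpNorm p f ≤ 1 → lpNorm q g ≤ 1 →
        (∑' j : {j : Zd d // (j₀ : ℝ) < znorm j},
            ENNReal.ofReal ‖comm1 Θ b f g j.1‖ ^ r.toReal) ^ (1 / r.toReal)
          < ENNReal.ofReal ε :=
  stmt_9_general N hN Θ hΘ p q r hp hq hr hr' b j₁ hb

end
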